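/- Under the hypotheses of the main existence theorem (α ≥ 1 a rational with odd denominator, γ ∈ (0,1] a ratio of odd positive integers, f locally Lipschitz, Σ_{n=0}^∞ |1/r_n|^{1/γ} Σ_{i=n}^∞ |a_i| < ∞, Σ_{n=0}^∞ |1/r_n|^{1/γ} Σ_{i=n}^∞ |q_i| < ∞, −1 < liminf p_n ≤ limsup p_n < 1, Σ|a_i| < ∞, Σ|q_i| < ∞), and with d, n_0, n_3, B and T as in the construction, the operator T : B → l^∞ is continuous with respect to the supremum norm: if y^{(p)} ∈ B and ‖y^{(p)} − x‖_∞ → 0 with x ∈ B, then ‖T y^{(p)} − T x‖_∞ → 0. -/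

import Mathlib

open Filter Topology

/-- Sign-preserving power `x ^ ρ` for a rational exponent `ρ = s/t` (in lowest terms) with
odd denominator `t`: it is the unique real `y` with `y ^ t = x ^ s`.  For `x ≥ 0` it agrees
with the usual real power. -/
noncomputable def opow (x : ℝ) (ρ : ℚ) : ℝ :=
  if Even ρ.num ∨ 0 ≤ x then |x| ^ (ρ : ℝ) else -(|x| ^ (ρ : ℝ))

/-- The operator `T`:
`(Tx)_n = -p_n x_{n-k} - Σ_{j=n}^∞ ((1/r_j) Σ_{i=j}^∞ (a_i f(x_{i+1}) + q_i x_i^α))^{1/γ}`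
for `n ≥ n₃`, and `(Tx)_n = x_n` for `n < n₃`. -/
noncomputable def Tmap (k n₃ : ℕ) (r a p q : ℕ → ℝ) (f : ℝ → ℝ) (α γ : ℚ)
    (x : ℕ → ℝ) (n : ℕ) : ℝ :=
  if n₃ ≤ n then
    -(p n * x (n - k)) -
      ∑' j : ℕ, opow ((1 / r (n + j)) *
        ∑' i : ℕ, (a (n + j + i) * f (x (n + j + i + 1)) +
          q (n + j + i) * opow (x (n + j + i)) α)) γ⁻¹
  else x n

/-!
For `n < n₃` the operator is the identity, and `-p_n x_{n-k}` is `P`-Lipschitz in the sup norm.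
On `B` the inner sums `(1/r_w) Σ_{i≥w} (a_i f(x_{i+1}) + q_i x_i^α)` are bounded by `|1/r_w| K`
with `K = Σ|a_i| M_d + Σ|q_i| d^α`, and `u ↦ u^{1/γ}` is Lipschitz on `[-L, L]` with constant
`(1/γ) L^{1/γ-1}`. Hence, if `‖y - x‖ ≤ δ` and `f` moves by at most `η` on `[-d, d]`, the `w`-th
term of the outer series moves by at most
`(1/γ) K^{1/γ-1} |1/r_w|^{1/γ} (η Σ_{i≥w} |a_i| + α d^{α-1} δ Σ_{i≥w} |q_i|)`.
These weights are summable by hypothesis, so `T` moves by `O(δ + η)` uniformly in `n`, and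
uniform continuity of `f` on `[-d, d]` makes `η` small together with `δ`.
-/

open Set

lemma abs_opow (x : ℝ) (ρ : ℚ) : |opow x ρ| = |x| ^ (ρ : ℝ) := by
  unfold opow
  split <;> simp [abs_of_nonneg (Real.rpow_nonneg (abs_nonneg x) _)]

lemma opow_zero_left {ρ : ℚ} (hρ : ρ ≠ 0) : opow 0 ρ = 0 := by
  rw [← abs_eq_zero, abs_opow, abs_zero, Real.zero_rpow (by exact_mod_cast hρ)]

lemma abs_rpow_sub_rpow_le {c B u v : ℝ} (hc : 1 ≤ c) (hu : u ∈ Icc 0 B) (hv : v ∈ Icc 0 B) :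
    |u ^ c - v ^ c| ≤ c * B ^ (c - 1) * |u - v| := by
  have hderiv : ∀ t ∈ Icc 0 B,
      HasDerivWithinAt (fun t : ℝ => t ^ c) (c * t ^ (c - 1)) (Icc 0 B) t :=
    fun t _ => (Real.hasDerivAt_rpow_const (Or.inr hc)).hasDerivWithinAt
  have hbound : ∀ t ∈ Icc 0 B, ‖c * t ^ (c - 1)‖ ≤ c * B ^ (c - 1) := by
    intro t ht
    have := Real.rpow_nonneg ht.1 (c - 1)
    rw [Real.norm_eq_abs, abs_of_nonneg (by positivity)]
    exact mul_le_mul_of_nonneg_left (Real.rpow_le_rpow ht.1 ht.2 (by linarith)) (by linarith)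
  simpa [Real.norm_eq_abs] using
    (convex_Icc 0 B).norm_image_sub_le_of_norm_hasDerivWithin_le hderiv hbound hv hu

lemma abs_opow_sub_opow_le {ρ : ℚ} {B u v : ℝ} (hρ : 1 ≤ ρ) (hu : |u| ≤ B) (hv : |v| ≤ B) :
    |opow u ρ - opow v ρ| ≤ ρ * B ^ ((ρ : ℝ) - 1) * |u - v| := by
  set L := (ρ : ℝ) * B ^ ((ρ : ℝ) - 1)
  have hρ' : (1 : ℝ) ≤ ρ := by exact_mod_cast hρ
  have habs : ∀ s t, |s| ≤ B → |t| ≤ B →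
      |(|s| ^ (ρ : ℝ) - |t| ^ (ρ : ℝ))| ≤ L * |s - t| := by
    intro s t hs ht
    have hL : 0 ≤ L := by
      have := Real.rpow_nonneg ((abs_nonneg s).trans hs) ((ρ : ℝ) - 1)
      positivity
    calc _ ≤ L * |(|s| - |t|)| := abs_rpow_sub_rpow_le hρ' ⟨abs_nonneg s, hs⟩ ⟨abs_nonneg t, ht⟩
      _ ≤ L * |s - t| := mul_le_mul_of_nonneg_left (abs_abs_sub_abs_le_abs_sub s t) hL
  have hzero : ∀ s, |s| ≤ B → |s| ^ (ρ : ℝ) ≤ L * |s| := fun s hs => by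
    simpa [Real.zero_rpow (by positivity : (ρ : ℝ) ≠ 0), abs_of_nonneg (Real.rpow_nonneg
      (abs_nonneg s) _)] using habs s 0 hs (by simpa using (abs_nonneg s).trans hs)
  have hopposite : ∀ s t, |s| ≤ B → |t| ≤ B → 0 ≤ s → t < 0 →
      |s| ^ (ρ : ℝ) + |t| ^ (ρ : ℝ) ≤ L * |s - t| := by
    intro s t hs ht hs₀ ht₀
    have hst : |s - t| = |s| + |t| := by
      rw [abs_of_nonneg hs₀, abs_of_neg ht₀, abs_of_nonneg (by linarith)]; ring
    rw [hst, mul_add]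
    linarith [hzero s hs, hzero t ht]
  have hpow : ∀ s : ℝ, 0 ≤ |s| ^ (ρ : ℝ) := fun s => Real.rpow_nonneg (abs_nonneg s) _
  unfold opow
  split_ifs with hu₀ hv₀ hv₀
  · exact habs u v hu hv
  · rw [not_or, not_le] at hv₀
    rw [sub_neg_eq_add, abs_of_nonneg (add_nonneg (hpow u) (hpow v))]
    exact hopposite u v hu hv (hu₀.resolve_left hv₀.1) hv₀.2
  · rw [not_or, not_le] at hu₀
    rw [← neg_add', abs_neg, add_comm, abs_of_nonneg (add_nonneg (hpow v) (hpow u)),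
      abs_sub_comm]
    exact hopposite v u hv hu (hv₀.resolve_left hu₀.1) hu₀.2
  · rw [neg_sub_neg, abs_sub_comm]
    exact habs u v hu hv

lemma abs_opow_sub_opow_le_of_le_mul {ρ : ℚ} {s K D u v : ℝ} (hρ : 1 ≤ ρ) (hs : 0 ≤ s)
    (hK : 0 ≤ K) (hu : |u| ≤ s * K) (hv : |v| ≤ s * K) (huv : |u - v| ≤ s * D) :
    |opow u ρ - opow v ρ| ≤ ρ * K ^ ((ρ : ℝ) - 1) * (s ^ (ρ : ℝ) * D) := by
  have hρ₀ : (ρ : ℝ) - 1 + 1 ≠ 0 := by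
    rw [sub_add_cancel]; exact_mod_cast (zero_lt_one.trans_le hρ).ne'
  calc |opow u ρ - opow v ρ| ≤ ρ * (s * K) ^ ((ρ : ℝ) - 1) * |u - v| :=
        abs_opow_sub_opow_le hρ hu hv
    _ ≤ ρ * (s * K) ^ ((ρ : ℝ) - 1) * (s * D) := by
        have : (0 : ℝ) ≤ ρ := by exact_mod_cast (zero_le_one.trans hρ)
        have := Real.rpow_nonneg (mul_nonneg hs hK) ((ρ : ℝ) - 1)
        gcongr
    _ = ρ * K ^ ((ρ : ℝ) - 1) * (s ^ ((ρ : ℝ) - 1 + 1) * D) := by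
        rw [Real.mul_rpow hs hK, Real.rpow_add_one' hs hρ₀]; ring
    _ = ρ * K ^ ((ρ : ℝ) - 1) * (s ^ (ρ : ℝ) * D) := by rw [sub_add_cancel]

lemma summable_and_abs_tsum_le {F a q : ℕ → ℝ} {M N : ℝ} (ha : Summable fun i => |a i|)
    (hq : Summable fun i => |q i|) (hF : ∀ i, |F i| ≤ |a i| * M + |q i| * N) :
    Summable F ∧ |∑' i, F i| ≤ (∑' i, |a i|) * M + (∑' i, |q i|) * N := by
  have hg := (ha.hasSum.mul_right M).add (hq.hasSum.mul_right N)
  exact ⟨hg.summable.of_norm_bounded hF, tsum_of_norm_bounded (f := F) hg hF⟩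

lemma abs_tsum_sub_tsum_le {u v g h : ℕ → ℝ} (hg : Summable g) (hh : Summable h)
    (hu : ∀ j, |u j| ≤ h j) (hv : ∀ j, |v j| ≤ h j) (huv : ∀ j, |u j - v j| ≤ g j) :
    |∑' j, u j - ∑' j, v j| ≤ ∑' j, g j := by
  rw [← (hh.of_norm_bounded hu).tsum_sub (hh.of_norm_bounded hv)]
  exact tsum_of_norm_bounded (f := fun j => u j - v j) hg.hasSum huv

lemma tsum_nat_add_le {g : ℕ → ℝ} (hg : Summable g) (hg₀ : 0 ≤ g) (n : ℕ) :
    ∑' j, g (n + j) ≤ ∑' j, g j :=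
  tsum_comp_le_tsum_of_inj hg hg₀ (add_right_injective n)

section Operator

variable {r a q : ℕ → ℝ} {f : ℝ → ℝ} {α : ℚ} {n₀ : ℕ} {d Md : ℝ}

noncomputable def innerTerm (a q : ℕ → ℝ) (f : ℝ → ℝ) (α : ℚ) (z : ℕ → ℝ) (i : ℕ) : ℝ :=
  a i * f (z (i + 1)) + q i * opow (z i) α

noncomputable def innerSum (r a q : ℕ → ℝ) (f : ℝ → ℝ) (α : ℚ) (z : ℕ → ℝ) (w : ℕ) : ℝ :=
  1 / r w * ∑' i, innerTerm a q f α z (w + i)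

noncomputable def innerBound (a q : ℕ → ℝ) (α : ℚ) (d Md : ℝ) : ℝ :=
  (∑' i, |a i|) * Md + (∑' i, |q i|) * d ^ (α : ℝ)

noncomputable def weightedTail (r a : ℕ → ℝ) (ρ : ℝ) (w : ℕ) : ℝ :=
  |1 / r w| ^ ρ * ∑' i, |a (w + i)|

lemma Tmap_of_le {k n₃ n : ℕ} {p : ℕ → ℝ} {γ : ℚ} (z : ℕ → ℝ) (hn : n₃ ≤ n) :
    Tmap k n₃ r a p q f α γ z n =
      -(p n * z (n - k)) - ∑' j, opow (innerSum r a q f α z (n + j)) γ⁻¹ :=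
  if_pos hn

lemma Tmap_of_lt {k n₃ n : ℕ} {p : ℕ → ℝ} {γ : ℚ} (z : ℕ → ℝ) (hn : n < n₃) :
    Tmap k n₃ r a p q f α γ z n = z n :=
  if_neg hn.not_ge

lemma abs_innerTerm_le {z : ℕ → ℝ} {i : ℕ} (hα : 0 ≤ α) (hMd : ∀ u : ℝ, |u| ≤ d → |f u| ≤ Md)
    (hz : ∀ i, n₀ ≤ i → |z i| ≤ d) (hi : n₀ ≤ i) :
    |innerTerm a q f α z i| ≤ |a i| * Md + |q i| * d ^ (α : ℝ) := by
  have hα' : (0 : ℝ) ≤ α := by exact_mod_cast hα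
  calc |innerTerm a q f α z i| ≤ |a i| * |f (z (i + 1))| + |q i| * |z i| ^ (α : ℝ) := by
        rw [innerTerm, ← abs_mul, ← abs_opow, ← abs_mul]; exact abs_add_le _ _
    _ ≤ |a i| * Md + |q i| * d ^ (α : ℝ) := by
        gcongr
        · exact hMd _ (hz _ (by omega))
        · exact hz i hi

lemma abs_innerTerm_sub_le {z₁ z₂ : ℕ → ℝ} {η θ : ℝ} {i : ℕ}
    (hη : ∀ i, n₀ ≤ i → |f (z₁ i) - f (z₂ i)| ≤ η)
    (hθ : ∀ i, n₀ ≤ i → |opow (z₁ i) α - opow (z₂ i) α| ≤ θ) (hi : n₀ ≤ i) :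
    |innerTerm a q f α z₁ i - innerTerm a q f α z₂ i| ≤ |a i| * η + |q i| * θ := by
  calc |innerTerm a q f α z₁ i - innerTerm a q f α z₂ i|
      = |a i * (f (z₁ (i + 1)) - f (z₂ (i + 1))) + q i * (opow (z₁ i) α - opow (z₂ i) α)| := by
        rw [innerTerm, innerTerm]; congr 1; ring
    _ ≤ |a i| * |f (z₁ (i + 1)) - f (z₂ (i + 1))| + |q i| * |opow (z₁ i) α - opow (z₂ i) α| := by
        rw [← abs_mul, ← abs_mul]; exact abs_add_le _ _
    _ ≤ |a i| * η + |q i| * θ := by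
        gcongr
        · exact hη _ (by omega)
        · exact hθ i hi

lemma weightedTail_nonneg (r a : ℕ → ℝ) (ρ : ℝ) (w : ℕ) : 0 ≤ weightedTail r a ρ w :=
  mul_nonneg (Real.rpow_nonneg (abs_nonneg _) _) (tsum_nonneg fun _ => abs_nonneg _)

lemma summable_innerTerm {z : ℕ → ℝ} {w : ℕ} (ha : Summable fun i => |a i|)
    (hq : Summable fun i => |q i|) (hα : 0 ≤ α) (hMd : ∀ u : ℝ, |u| ≤ d → |f u| ≤ Md)
    (hz : ∀ i, n₀ ≤ i → |z i| ≤ d) (hw : n₀ ≤ w) :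
    Summable fun i => innerTerm a q f α z (w + i) :=
  (summable_and_abs_tsum_le (ha.comp_injective (add_right_injective w))
    (hq.comp_injective (add_right_injective w))
    fun i => abs_innerTerm_le hα hMd hz (hw.trans (Nat.le_add_right w i))).1

lemma abs_innerSum_le {z : ℕ → ℝ} {w : ℕ} (ha : Summable fun i => |a i|)
    (hq : Summable fun i => |q i|) (hα : 0 ≤ α) (hMd : ∀ u : ℝ, |u| ≤ d → |f u| ≤ Md)
    (hz : ∀ i, n₀ ≤ i → |z i| ≤ d) (hw : n₀ ≤ w) :
    |innerSum r a q f α z w| ≤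
      |1 / r w| * ((∑' i, |a (w + i)|) * Md + (∑' i, |q (w + i)|) * d ^ (α : ℝ)) := by
  rw [innerSum, abs_mul]
  gcongr
  exact (summable_and_abs_tsum_le (ha.comp_injective (add_right_injective w))
    (hq.comp_injective (add_right_injective w))
    fun i => abs_innerTerm_le hα hMd hz (hw.trans (Nat.le_add_right w i))).2

lemma abs_innerSum_le_mul {z : ℕ → ℝ} {w : ℕ} (ha : Summable fun i => |a i|)
    (hq : Summable fun i => |q i|) (hα : 0 ≤ α) (hd : 0 ≤ d)
    (hMd : ∀ u : ℝ, |u| ≤ d → |f u| ≤ Md) (hz : ∀ i, n₀ ≤ i → |z i| ≤ d) (hw : n₀ ≤ w) :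
    |innerSum r a q f α z w| ≤ |1 / r w| * innerBound a q α d Md := by
  have hMd₀ : 0 ≤ Md := (abs_nonneg _).trans (hMd 0 (by simpa using hd))
  refine (abs_innerSum_le ha hq hα hMd hz hw).trans ?_
  unfold innerBound
  gcongr _ * (?_ * _ + ?_ * _)
  · exact tsum_nat_add_le ha (fun _ => abs_nonneg _) w
  · exact tsum_nat_add_le hq (fun _ => abs_nonneg _) w

lemma abs_innerSum_sub_le {z₁ z₂ : ℕ → ℝ} {η θ : ℝ} {w : ℕ} (ha : Summable fun i => |a i|)
    (hq : Summable fun i => |q i|) (hα : 0 ≤ α) (hMd : ∀ u : ℝ, |u| ≤ d → |f u| ≤ Md)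
    (hz₁ : ∀ i, n₀ ≤ i → |z₁ i| ≤ d) (hz₂ : ∀ i, n₀ ≤ i → |z₂ i| ≤ d)
    (hη : ∀ i, n₀ ≤ i → |f (z₁ i) - f (z₂ i)| ≤ η)
    (hθ : ∀ i, n₀ ≤ i → |opow (z₁ i) α - opow (z₂ i) α| ≤ θ) (hw : n₀ ≤ w) :
    |innerSum r a q f α z₁ w - innerSum r a q f α z₂ w| ≤
      |1 / r w| * ((∑' i, |a (w + i)|) * η + (∑' i, |q (w + i)|) * θ) := by
  rw [innerSum, innerSum, ← mul_sub, abs_mul, ← (summable_innerTerm ha hq hα hMd hz₁ hw).tsum_sub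
    (summable_innerTerm ha hq hα hMd hz₂ hw)]
  gcongr
  exact (summable_and_abs_tsum_le (ha.comp_injective (add_right_injective w))
    (hq.comp_injective (add_right_injective w))
    fun i => abs_innerTerm_sub_le hη hθ (hw.trans (Nat.le_add_right w i))).2

lemma innerBound_nonneg (hd : 0 ≤ d) (hMd : ∀ u : ℝ, |u| ≤ d → |f u| ≤ Md) :
    0 ≤ innerBound a q α d Md := by
  unfold innerBound
  have := (abs_nonneg _).trans (hMd 0 (by simpa using hd))
  have := Real.rpow_nonneg hd (α : ℝ)
  have : 0 ≤ ∑' i, |a i| := tsum_nonneg fun i => abs_nonneg (a i)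
  have : 0 ≤ ∑' i, |q i| := tsum_nonneg fun i => abs_nonneg (q i)
  positivity

lemma abs_opow_innerSum_le {ρ : ℚ} {z : ℕ → ℝ} {w : ℕ} (hρ : 1 ≤ ρ)
    (ha : Summable fun i => |a i|) (hq : Summable fun i => |q i|) (hα : 0 ≤ α) (hd : 0 ≤ d)
    (hMd : ∀ u : ℝ, |u| ≤ d → |f u| ≤ Md) (hz : ∀ i, n₀ ≤ i → |z i| ≤ d) (hw : n₀ ≤ w) :
    |opow (innerSum r a q f α z w) ρ| ≤
      ρ * innerBound a q α d Md ^ ((ρ : ℝ) - 1) *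
        (Md * weightedTail r a ρ w + d ^ (α : ℝ) * weightedTail r q ρ w) := by
  have hK : 0 ≤ innerBound a q α d Md := innerBound_nonneg hd hMd
  have h := abs_opow_sub_opow_le_of_le_mul (v := 0) hρ (abs_nonneg (1 / r w)) hK
    (abs_innerSum_le_mul ha hq hα hd hMd hz hw)
    (by rw [abs_zero]; exact mul_nonneg (abs_nonneg _) hK)
    (by simpa using abs_innerSum_le ha hq hα hMd hz hw)
  rw [opow_zero_left (by positivity), sub_zero] at h
  refine h.trans_eq ?_
  unfold weightedTail
  ring

lemma abs_opow_innerSum_sub_le {ρ : ℚ} {z₁ z₂ : ℕ → ℝ} {η θ : ℝ} {w : ℕ} (hρ : 1 ≤ ρ)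
    (ha : Summable fun i => |a i|) (hq : Summable fun i => |q i|) (hα : 0 ≤ α) (hd : 0 ≤ d)
    (hMd : ∀ u : ℝ, |u| ≤ d → |f u| ≤ Md)
    (hz₁ : ∀ i, n₀ ≤ i → |z₁ i| ≤ d) (hz₂ : ∀ i, n₀ ≤ i → |z₂ i| ≤ d)
    (hη : ∀ i, n₀ ≤ i → |f (z₁ i) - f (z₂ i)| ≤ η)
    (hθ : ∀ i, n₀ ≤ i → |opow (z₁ i) α - opow (z₂ i) α| ≤ θ) (hw : n₀ ≤ w) :
    |opow (innerSum r a q f α z₁ w) ρ - opow (innerSum r a q f α z₂ w) ρ| ≤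
      ρ * innerBound a q α d Md ^ ((ρ : ℝ) - 1) *
        (η * weightedTail r a ρ w + θ * weightedTail r q ρ w) := by
  have hK : 0 ≤ innerBound a q α d Md := innerBound_nonneg hd hMd
  refine (abs_opow_sub_opow_le_of_le_mul hρ (abs_nonneg (1 / r w)) hK
    (abs_innerSum_le_mul ha hq hα hd hMd hz₁ hw) (abs_innerSum_le_mul ha hq hα hd hMd hz₂ hw)
    (abs_innerSum_sub_le ha hq hα hMd hz₁ hz₂ hη hθ hw)).trans_eq ?_
  unfold weightedTail
  ring

lemma abs_tsum_opow_innerSum_sub_le {ρ : ℚ} {z₁ z₂ : ℕ → ℝ} {η θ : ℝ} {n : ℕ} (hρ : 1 ≤ ρ)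
    (ha : Summable fun i => |a i|) (hq : Summable fun i => |q i|)
    (hra : Summable (weightedTail r a ρ)) (hrq : Summable (weightedTail r q ρ))
    (hα : 0 ≤ α) (hd : 0 ≤ d) (hMd : ∀ u : ℝ, |u| ≤ d → |f u| ≤ Md)
    (hz₁ : ∀ i, n₀ ≤ i → |z₁ i| ≤ d) (hz₂ : ∀ i, n₀ ≤ i → |z₂ i| ≤ d)
    (hη : ∀ i, n₀ ≤ i → |f (z₁ i) - f (z₂ i)| ≤ η)
    (hθ : ∀ i, n₀ ≤ i → |opow (z₁ i) α - opow (z₂ i) α| ≤ θ) (hn : n₀ ≤ n) :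
    |∑' j, opow (innerSum r a q f α z₁ (n + j)) ρ - ∑' j, opow (innerSum r a q f α z₂ (n + j)) ρ|
      ≤ ρ * innerBound a q α d Md ^ ((ρ : ℝ) - 1) *
        (η * ∑' w, weightedTail r a ρ w + θ * ∑' w, weightedTail r q ρ w) := by
  set Λ := (ρ : ℝ) * innerBound a q α d Md ^ ((ρ : ℝ) - 1)
  have hΛ : 0 ≤ Λ := by
    have := Real.rpow_nonneg (innerBound_nonneg (a := a) (q := q) (α := α) hd hMd) ((ρ : ℝ) - 1)
    have : (0 : ℝ) ≤ ρ := by exact_mod_cast zero_le_one.trans hρ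
    positivity
  have hη₀ : 0 ≤ η := (abs_nonneg _).trans (hη n₀ le_rfl)
  have hθ₀ : 0 ≤ θ := (abs_nonneg _).trans (hθ n₀ le_rfl)
  have hsum : ∀ X Y : ℝ,
      Summable fun w => Λ * (X * weightedTail r a ρ w + Y * weightedTail r q ρ w) :=
    fun X Y => ((hra.mul_left X).add (hrq.mul_left Y)).mul_left Λ
  have hw : ∀ j, n₀ ≤ n + j := fun j => hn.trans (Nat.le_add_right n j)
  calc _ ≤ ∑' j, Λ * (η * weightedTail r a ρ (n + j) + θ * weightedTail r q ρ (n + j)) :=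
        abs_tsum_sub_tsum_le ((hsum η θ).comp_injective (add_right_injective n))
          ((hsum Md (d ^ (α : ℝ))).comp_injective (add_right_injective n))
          (fun j => abs_opow_innerSum_le hρ ha hq hα hd hMd hz₁ (hw j))
          (fun j => abs_opow_innerSum_le hρ ha hq hα hd hMd hz₂ (hw j))
          (fun j => abs_opow_innerSum_sub_le hρ ha hq hα hd hMd hz₁ hz₂ hη hθ (hw j))
    _ ≤ ∑' w, Λ * (η * weightedTail r a ρ w + θ * weightedTail r q ρ w) :=
        tsum_nat_add_le (hsum η θ) (fun w => by
          have := weightedTail_nonneg r a ρ w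
          have := weightedTail_nonneg r q ρ w
          positivity) n
    _ = Λ * (η * ∑' w, weightedTail r a ρ w + θ * ∑' w, weightedTail r q ρ w) := by
        rw [tsum_mul_left, (hra.mul_left η).tsum_add (hrq.mul_left θ), tsum_mul_left,
          tsum_mul_left]

lemma abs_Tmap_sub_Tmap_le {k n₃ n : ℕ} {p : ℕ → ℝ} {γ : ℚ} {P δ η : ℝ} {z₁ z₂ : ℕ → ℝ}
    (hα : 1 ≤ α) (hγ : 1 ≤ γ⁻¹) (ha : Summable fun i => |a i|) (hq : Summable fun i => |q i|)
    (hra : Summable (weightedTail r a (γ : ℝ)⁻¹)) (hrq : Summable (weightedTail r q (γ : ℝ)⁻¹))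
    (hd : 0 ≤ d) (hMd : ∀ u : ℝ, |u| ≤ d → |f u| ≤ Md) (hp : ∀ n, n₀ ≤ n → |p n| ≤ P)
    (hz₁ : ∀ i, n₀ ≤ i → |z₁ i| ≤ d) (hz₂ : ∀ i, n₀ ≤ i → |z₂ i| ≤ d)
    (hδ : ∀ i, |z₁ i - z₂ i| ≤ δ) (hη : ∀ i, n₀ ≤ i → |f (z₁ i) - f (z₂ i)| ≤ η)
    (hn₀ : n₀ ≤ n₃) (hn : n₃ ≤ n) :
    |Tmap k n₃ r a p q f α γ z₁ n - Tmap k n₃ r a p q f α γ z₂ n| ≤ P * δ +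
      (γ : ℝ)⁻¹ * innerBound a q α d Md ^ ((γ : ℝ)⁻¹ - 1) *
        (η * ∑' w, weightedTail r a (γ : ℝ)⁻¹ w +
          α * d ^ ((α : ℝ) - 1) * δ * ∑' w, weightedTail r q (γ : ℝ)⁻¹ w) := by
  have hθ : ∀ i, n₀ ≤ i → |opow (z₁ i) α - opow (z₂ i) α| ≤ α * d ^ ((α : ℝ) - 1) * δ := by
    intro i hi
    have : (0 : ℝ) ≤ α := by exact_mod_cast zero_le_one.trans hα
    have := Real.rpow_nonneg hd ((α : ℝ) - 1)
    exact (abs_opow_sub_opow_le hα (hz₁ i hi) (hz₂ i hi)).trans (by gcongr; exact hδ i)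
  have hsum := abs_tsum_opow_innerSum_sub_le (n := n) hγ ha hq (by rwa [Rat.cast_inv])
    (by rwa [Rat.cast_inv]) (zero_le_one.trans hα) hd hMd hz₁ hz₂ hη hθ (hn₀.trans hn)
  rw [Rat.cast_inv] at hsum
  have hpn : |p n| ≤ P := hp n (hn₀.trans hn)
  have hsplit : ∀ A B S T : ℝ, |(-A - S) - (-B - T)| ≤ |B - A| + |S - T| := fun A B S T => by
    rw [show (-A - S) - (-B - T) = (B - A) - (S - T) by ring]
    exact abs_sub _ _
  rw [Tmap_of_le z₁ hn, Tmap_of_le z₂ hn]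
  refine (hsplit _ _ _ _).trans (add_le_add ?_ hsum)
  rw [← mul_sub, abs_mul, abs_sub_comm]
  exact mul_le_mul hpn (hδ _) (abs_nonneg _) ((abs_nonneg _).trans hpn)

theorem exists_pos_abs_Tmap_sub_le {k n₃ : ℕ} {p : ℕ → ℝ} {γ : ℚ} {P ε : ℝ}
    (hα : 1 ≤ α) (hγ : 1 ≤ γ⁻¹) (hf : ContinuousOn f (Icc (-d) d))
    (ha : Summable fun i => |a i|) (hq : Summable fun i => |q i|)
    (hra : Summable (weightedTail r a (γ : ℝ)⁻¹)) (hrq : Summable (weightedTail r q (γ : ℝ)⁻¹))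
    (hd : 0 ≤ d) (hMd : ∀ u : ℝ, |u| ≤ d → |f u| ≤ Md) (hp : ∀ n, n₀ ≤ n → |p n| ≤ P)
    (hn₀ : n₀ ≤ n₃) (hε : 0 < ε) :
    ∃ δ > 0, ∀ z₁ z₂ : ℕ → ℝ, (∀ i, n₀ ≤ i → |z₁ i| ≤ d) → (∀ i, n₀ ≤ i → |z₂ i| ≤ d) →
      (∀ i, |z₁ i - z₂ i| ≤ δ) →
        ∀ n, |Tmap k n₃ r a p q f α γ z₁ n - Tmap k n₃ r a p q f α γ z₂ n| ≤ ε := by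
  set Λ := (γ : ℝ)⁻¹ * innerBound a q α d Md ^ ((γ : ℝ)⁻¹ - 1)
  set Sa := ∑' w, weightedTail r a (γ : ℝ)⁻¹ w
  set Sq := ∑' w, weightedTail r q (γ : ℝ)⁻¹ w
  obtain ⟨η, hη, hηε⟩ := exists_pos_mul_lt (half_pos hε) (Λ * Sa)
  obtain ⟨δ₁, hδ₁, hδ₁ε⟩ :=
    exists_pos_mul_lt (half_pos hε) (P + Λ * (α * d ^ ((α : ℝ) - 1)) * Sq)
  obtain ⟨δ₂, hδ₂, hfδ₂⟩ := Metric.uniformContinuousOn_iff_le.mp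
    (isCompact_Icc.uniformContinuousOn_of_continuous hf) η hη
  refine ⟨min ε (min δ₁ δ₂), lt_min hε (lt_min hδ₁ hδ₂), fun z₁ z₂ hz₁ hz₂ hz n => ?_⟩
  have hfz : ∀ i, n₀ ≤ i → |f (z₁ i) - f (z₂ i)| ≤ η := fun i hi =>
    hfδ₂ _ (mem_Icc.mpr (abs_le.mp (hz₁ i hi))) _ (mem_Icc.mpr (abs_le.mp (hz₂ i hi)))
      ((hz i).trans (min_le_right _ _ |>.trans (min_le_right _ _)))
  rcases lt_or_ge n n₃ with hn | hn
  · rw [Tmap_of_lt z₁ hn, Tmap_of_lt z₂ hn]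
    exact (hz n).trans (min_le_left _ _)
  · have hδ : ∀ i, |z₁ i - z₂ i| ≤ δ₁ := fun i =>
      (hz i).trans (min_le_right _ _ |>.trans (min_le_left _ _))
    have := abs_Tmap_sub_Tmap_le (k := k) hα hγ ha hq hra hrq hd hMd hp hz₁ hz₂ hδ hfz hn₀ hn
    linarith

end Operator

theorem T_is_continuous_general
    (k : ℕ) (α γ : ℚ)
    (hα : 1 ≤ α)
    (hγ0 : 0 < γ) (hγ1 : γ ≤ 1)
    (f : ℝ → ℝ) (hf : LocallyLipschitz f)
    (r a p q : ℕ → ℝ)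
    (hra : Summable fun n => |1 / r n| ^ (γ : ℝ)⁻¹ * ∑' i : ℕ, |a (n + i)|)
    (hrq : Summable fun n => |1 / r n| ^ (γ : ℝ)⁻¹ * ∑' i : ℕ, |q (n + i)|)
    (ha : Summable fun i => |a i|) (hq : Summable fun i => |q i|)
    (d : ℝ) (hd : 0 < d) (P : ℝ)
    (n₀ n₃ : ℕ) (hn₃ : n₀ + k ≤ n₃)
    (hp : ∀ n, n₀ ≤ n → |p n| ≤ P)
    (Md : ℝ) (hMd : ∀ u : ℝ, |u| ≤ d → |f u| ≤ Md)
    -- `y⁽ᵖ⁾` is a sequence of elements of `B` converging in the supremum norm to `x ∈ B`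
    (y : ℕ → ℕ → ℝ) (x : ℕ → ℝ)
    (hy : ∀ m, ∀ i, n₀ ≤ i → |y m i| ≤ d)
    (hx : ∀ i, n₀ ≤ i → |x i| ≤ d)
    (hconv : ∀ ε : ℝ, 0 < ε → ∃ N : ℕ, ∀ m, N ≤ m → ∀ n : ℕ, |y m n - x n| ≤ ε) :
    ∀ ε : ℝ, 0 < ε → ∃ N : ℕ, ∀ m, N ≤ m → ∀ n : ℕ,
      |Tmap k n₃ r a p q f α γ (y m) n - Tmap k n₃ r a p q f α γ x n| ≤ ε := by
  intro ε hε
  obtain ⟨δ, hδ, hT⟩ := exists_pos_abs_Tmap_sub_le (k := k) hα ((one_le_inv₀ hγ0).mpr hγ1)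
    hf.continuous.continuousOn ha hq hra hrq hd.le hMd hp ((Nat.le_add_right n₀ k).trans hn₃) hε
  obtain ⟨N, hN⟩ := hconv δ hδ
  exact ⟨N, fun m hm => hT (y m) x (hy m) hx (hN m hm)⟩

/-- Step 2: under the hypotheses of the main existence theorem and with the construction
data `d, P, n₀, n₃, M_d, C`, the operator `T` is continuous on
`B = {x : |x_n| ≤ d for n ≥ n₀}` for the supremum norm: uniform convergence
`y⁽ᵖ⁾ → x` implies uniform convergence `T y⁽ᵖ⁾ → T x`. -/
theorem T_is_continuous
    (k : ℕ) (hk : 0 < k) (α γ : ℚ)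
    (hα : 1 ≤ α) (hαden : Odd α.den)
    (hγ0 : 0 < γ) (hγ1 : γ ≤ 1) (hγnum : Odd γ.num) (hγden : Odd γ.den)
    (f : ℝ → ℝ) (hf : LocallyLipschitz f)
    (r a p q : ℕ → ℝ) (hr : ∀ n, r n ≠ 0)
    (hra : Summable fun n => |1 / r n| ^ (γ : ℝ)⁻¹ * ∑' i : ℕ, |a (n + i)|)
    (hrq : Summable fun n => |1 / r n| ^ (γ : ℝ)⁻¹ * ∑' i : ℕ, |q (n + i)|)
    (hp1 : (-1 : EReal) < liminf (fun n => (p n : EReal)) atTop)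
    (hp2 : liminf (fun n => (p n : EReal)) atTop ≤ limsup (fun n => (p n : EReal)) atTop)
    (hp3 : limsup (fun n => (p n : EReal)) atTop < 1)
    (ha : Summable fun i => |a i|) (hq : Summable fun i => |q i|)
    (d : ℝ) (hd : 0 < d) (P : ℝ) (hP0 : 0 ≤ P) (hP1 : P < 1)
    (n₀ n₃ : ℕ) (hn₃ : n₀ + k ≤ n₃)
    (hp : ∀ n, n₀ ≤ n → |p n| ≤ P)
    (Md : ℝ) (hMd : ∀ u : ℝ, |u| ≤ d → |f u| ≤ Md)
    (C : ℝ) (hC0 : 0 < C)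
    (hC : C ≤ (d - P * d) /
      (2 ^ ((γ : ℝ)⁻¹ - 1) * Md ^ (γ : ℝ)⁻¹ + 2 ^ ((γ : ℝ)⁻¹ - 1) * (opow d α) ^ (γ : ℝ)⁻¹))
    (htaila : ∀ n, n₃ ≤ n →
      ∑' j : ℕ, (|1 / r (n + j)| * ∑' i : ℕ, |a (n + j + i)|) ^ (γ : ℝ)⁻¹ ≤ C)
    (htailq : ∀ n, n₃ ≤ n →
      ∑' j : ℕ, (|1 / r (n + j)| * ∑' i : ℕ, |q (n + j + i)|) ^ (γ : ℝ)⁻¹ ≤ C)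
    -- `y⁽ᵖ⁾` is a sequence of elements of `B` converging in the supremum norm to `x ∈ B`
    (y : ℕ → ℕ → ℝ) (x : ℕ → ℝ)
    (hy : ∀ m, ∀ i, n₀ ≤ i → |y m i| ≤ d)
    (hx : ∀ i, n₀ ≤ i → |x i| ≤ d)
    (hconv : ∀ ε : ℝ, 0 < ε → ∃ N : ℕ, ∀ m, N ≤ m → ∀ n : ℕ, |y m n - x n| ≤ ε) :
    ∀ ε : ℝ, 0 < ε → ∃ N : ℕ, ∀ m, N ≤ m → ∀ n : ℕ,
      |Tmap k n₃ r a p q f α γ (y m) n - Tmap k n₃ r a p q f α γ x n| ≤ ε :=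
  T_is_continuous_general k α γ hα hγ0 hγ1 f hf r a p q hra hrq ha hq d hd P n₀ n₃ hn₃ hp Md hMd y x
    hy hx hconv
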